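/- Let M, N₁, N₂ be positive reals with N₁ ≥ N₂. Consider the four half-planes in (x, y)-coordinates where x = d₁ + d₀, y = d₂ (or x = d₁, y = d₂ + d₀): (1) (d₁+d₀)/min(M,N₁+N₂) + d₂/min(M,N₂) ≤ 1; (2) (d₁+d₀)/min(M,N₁) + d₂/min(M,N₁+N₂) ≤ 1; (3) d₁/min(M,N₁+N₂) + (d₂+d₀)/min(M,N₂) ≤ 1; (4) d₁/min(M,N₁) + (d₂+d₀)/min(M,N₁+N₂) ≤ 1. Then for nonnegative (d₁, d₂, d₀), constraints (1) and (4) are implied by constraints (2) and (3); i.e., the region cut out by (2) and (3) equals the region cut out by all four. -/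
import Mathlib

/-- In the 'DD' converse for the MIMO BC-CM, constraints (1) and (4)
are implied by constraints (2) and (3) for nonnegative `(d₁, d₂, d₀)`. -/
theorem stmt_10 (M N₁ N₂ d₁ d₂ d₀ : ℝ) (hM : 0 < M) (hN₁ : 0 < N₁) (hN₂ : 0 < N₂)
    (hN : N₁ ≥ N₂) (hd₁ : 0 ≤ d₁) (hd₂ : 0 ≤ d₂) (hd₀ : 0 ≤ d₀)
    (h2 : (d₁ + d₀) / min M N₁ + d₂ / min M (N₁ + N₂) ≤ 1)
    (h3 : d₁ / min M (N₁ + N₂) + (d₂ + d₀) / min M N₂ ≤ 1) :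
    (d₁ + d₀) / min M (N₁ + N₂) + d₂ / min M N₂ ≤ 1 ∧
    d₁ / min M N₁ + (d₂ + d₀) / min M (N₁ + N₂) ≤ 1 := by
  have hm2 : 0 < min M N₂ := lt_min hM hN₂
  have hm1 : 0 < min M N₁ := lt_min hM hN₁
  have hm12 : 0 < min M (N₁ + N₂) := lt_min hM (by linarith)
  have h21 : min M N₂ ≤ min M N₁ := min_le_min le_rfl hN
  have h112 : min M N₁ ≤ min M (N₁ + N₂) := min_le_min le_rfl (by linarith)
  have key1 : d₀ / min M (N₁ + N₂) ≤ d₀ / min M N₂ :=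
    div_le_div_of_nonneg_left hd₀ hm2 (le_trans h21 h112)
  have key2 : d₀ / min M N₁ ≤ d₀ / min M N₁ := le_rfl
  have key3 : d₀ / min M (N₁ + N₂) ≤ d₀ / min M N₁ :=
    div_le_div_of_nonneg_left hd₀ hm1 h112
  constructor
  · have : (d₁ + d₀) / min M (N₁ + N₂) + d₂ / min M N₂
        ≤ d₁ / min M (N₁ + N₂) + (d₂ + d₀) / min M N₂ := by
      rw [add_div, add_div]; linarith
    linarith
  · have : d₁ / min M N₁ + (d₂ + d₀) / min M (N₁ + N₂)
        ≤ (d₁ + d₀) / min M N₁ + d₂ / min M (N₁ + N₂) := by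
      rw [add_div, add_div]; linarith
    linarith
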